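/- The isometry group Isom(L_z) of the Gaussian lattice L_z has exactly 96 elements. -/

import Mathlib

/-- The imaginary unit `i` in the Gaussian integers `ℤ[i]`. -/
def gi : GaussianInt := Zsqrtd.sqrtd

/-- The underlying `ℤ[i]`-module of the Gaussian lattice `L_z`. -/
abbrev Lz : Type := GaussianInt × GaussianInt

/-- The Hermitian form of `L_z`, given by the matrix `[[-2, 1-i], [1+i, -2]]`;
conjugate-linear in the first argument, linear in the second. -/
def hz (x y : Lz) : GaussianInt :=
  star x.1 * (-2) * y.1 + star x.1 * (1 - gi) * y.2 +
    star x.2 * (1 + gi) * y.1 + star x.2 * (-2) * y.2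

/-- An isometry of `L_z`: a `ℤ[i]`-linear bijection preserving the form `hz`. -/
def IsIsomLz (A : Lz → Lz) : Prop :=
  Function.Bijective A ∧ (∀ x y : Lz, A (x + y) = A x + A y) ∧
    (∀ (c : GaussianInt) (x : Lz), A (c • x) = c • A x) ∧
    ∀ x y : Lz, hz (A x) (A y) = hz x y

/-- An involutive anti-isometry of `L_z`: an additive bijection `ν` with
`ν (c • v) = c̄ • ν v`, `hz (ν x) (ν y) = conj (hz x y)` and `ν ∘ ν = id`. -/
def IsInvAntiIsomLz (ν : Lz → Lz) : Prop :=
  Function.Bijective ν ∧ (∀ x y : Lz, ν (x + y) = ν x + ν y) ∧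
    (∀ (c : GaussianInt) (x : Lz), ν (c • x) = star c • ν x) ∧
    (∀ x y : Lz, hz (ν x) (ν y) = star (hz x y)) ∧
    ∀ x : Lz, ν (ν x) = x

/-- The anti-isometry `κ₁ : (x₁, x₂) ↦ (−x̄₂, −x̄₁)` of `L_z`. -/
def kappa1 (x : Lz) : Lz := (-(star x.2), -(star x.1))

/-- The anti-isometry `κ₃ : (x₁, x₂) ↦ (i·x̄₁, −x̄₂)` of `L_z`. -/
def kappa3 (x : Lz) : Lz := (gi * star x.1, -(star x.2))

/-!
An isometry is determined by the images of the standard basis, and these form a pair with the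
Gram matrix `H` of `hz`. Conversely every such pair defines an isometry: comparing determinants
of Gram matrices gives `|det|² · det H = det H` with `det H = 2`, so the determinant is a unit
and the matrix is invertible over `ℤ[i]`. Since `-hz` is positive definite
(`-hz x x = |x₁|² + |(1 - i) x₂ - x₁|²`), vectors with `hz x x = -2` have coordinates with real
and imaginary parts in `{-1, 0, 1}`, and a finite enumeration finds 96 such pairs.
-/

namespace Lz

lemma gi_mul_gi : gi * gi = -1 := by decide

lemma star_gi : star gi = -gi := rfl

lemma star_hz (x y : Lz) : star (hz x y) = hz y x := by
  simp only [hz, star_add, star_mul, star_star, star_sub, star_one, star_neg, star_ofNat, star_gi]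
  ring

def colMap (p : Lz × Lz) (x : Lz) : Lz := x.1 • p.1 + x.2 • p.2

def colDet (p : Lz × Lz) : GaussianInt := p.1.1 * p.2.2 - p.2.1 * p.1.2

/-- `p` has the Gram matrix of the standard basis, i.e. it is the image of the standard basis
under an isometry. -/
def IsFrame (p : Lz × Lz) : Prop := hz p.1 p.1 = -2 ∧ hz p.2 p.2 = -2 ∧ hz p.1 p.2 = 1 - gi

lemma colMap_add (p : Lz × Lz) (x y : Lz) : colMap p (x + y) = colMap p x + colMap p y := by
  simp only [colMap, Prod.fst_add, Prod.snd_add, add_smul]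
  abel

lemma colMap_smul (p : Lz × Lz) (c : GaussianInt) (x : Lz) :
    colMap p (c • x) = c • colMap p x := by
  simp only [colMap, Prod.smul_fst, Prod.smul_snd, smul_add, smul_assoc]

lemma colMap_injective : Function.Injective colMap := fun p q h =>
  Prod.ext (by simpa [colMap] using congrFun h (1, 0)) (by simpa [colMap] using congrFun h (0, 1))

lemma eq_colMap_of_linear {A : Lz → Lz} (hadd : ∀ x y, A (x + y) = A x + A y)
    (hsmul : ∀ (c : GaussianInt) x, A (c • x) = c • A x) : A = colMap (A (1, 0), A (0, 1)) := by
  funext x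
  have hx : x = x.1 • ((1, 0) : Lz) + x.2 • ((0, 1) : Lz) := by ext <;> simp
  conv_lhs => rw [hx, hadd, hsmul, hsmul]
  rfl

lemma hz_colMap (p : Lz × Lz) (x y : Lz) :
    hz (colMap p x) (colMap p y) =
      star x.1 * y.1 * hz p.1 p.1 + star x.1 * y.2 * hz p.1 p.2 +
        star x.2 * y.1 * hz p.2 p.1 + star x.2 * y.2 * hz p.2 p.2 := by
  simp only [hz, colMap, Prod.fst_add, Prod.snd_add, Prod.smul_fst, Prod.smul_snd, smul_eq_mul,
    star_add, star_mul]
  ring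

lemma hz_snd_fst_of_isFrame {p : Lz × Lz} (hp : IsFrame p) : hz p.2 p.1 = 1 + gi := by
  rw [← star_hz, hp.2.2, star_sub, star_one, star_gi, sub_neg_eq_add]

lemma hz_colMap_of_isFrame {p : Lz × Lz} (hp : IsFrame p) (x y : Lz) :
    hz (colMap p x) (colMap p y) = hz x y := by
  rw [hz_colMap, hp.1, hp.2.1, hp.2.2, hz_snd_fst_of_isFrame hp, hz]
  ring

lemma isFrame_of_hz_eq {A : Lz → Lz} (hA : ∀ x y, hz (A x) (A y) = hz x y) :
    IsFrame (A (1, 0), A (0, 1)) := by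
  refine ⟨?_, ?_, ?_⟩ <;> simp only [hA] <;> decide

lemma hz_det_eq (a b : Lz) :
    hz a a * hz b b - hz a b * hz b a = star (colDet (a, b)) * colDet (a, b) * 2 := by
  simp only [hz, colDet, star_sub, star_mul]
  linear_combination
    ((star a.1 * star b.2 - star a.2 * star b.1) * (a.1 * b.2 - a.2 * b.1)) * gi_mul_gi

lemma colDet_mul_star_of_isFrame {p : Lz × Lz} (hp : IsFrame p) :
    colDet p * star (colDet p) = 1 := by
  have h := hz_det_eq p.1 p.2
  rw [hp.1, hp.2.1, hp.2.2, hz_snd_fst_of_isFrame hp] at h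
  have h2 : (colDet p * star (colDet p) - 1) * 2 = 0 := by
    linear_combination -h + gi_mul_gi
  exact sub_eq_zero.1 ((mul_eq_zero.1 h2).resolve_right two_ne_zero)

lemma colMap_bijective_of_isFrame {p : Lz × Lz} (hp : IsFrame p) :
    Function.Bijective (colMap p) := by
  have hd := colDet_mul_star_of_isFrame hp
  -- the inverse is the adjugate divided by `colDet p`, whose inverse is its conjugate
  let B : Lz → Lz := fun y =>
    (star (colDet p) * (p.2.2 * y.1 - p.2.1 * y.2), star (colDet p) * (p.1.1 * y.2 - p.1.2 * y.1))
  refine Function.bijective_iff_has_inverse.2 ⟨B, fun x => ?_, fun y => ?_⟩ <;>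
    simp only [B, colMap, colDet, Prod.ext_iff, Prod.fst_add, Prod.snd_add, Prod.smul_fst,
      Prod.smul_snd, smul_eq_mul] at hd ⊢ <;>
    constructor <;> grind

lemma setOf_isIsomLz : {A : Lz → Lz | IsIsomLz A} = colMap '' {p | IsFrame p} := by
  ext A
  constructor
  · rintro ⟨-, hadd, hsmul, hA⟩
    exact ⟨_, isFrame_of_hz_eq hA, (eq_colMap_of_linear hadd hsmul).symm⟩
  · rintro ⟨p, hp, rfl⟩
    exact ⟨colMap_bijective_of_isFrame hp, colMap_add p, colMap_smul p, hz_colMap_of_isFrame hp⟩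

lemma neg_hz_self (x : Lz) :
    -hz x x = star x.1 * x.1 + star ((1 - gi) * x.2 - x.1) * ((1 - gi) * x.2 - x.1) := by
  simp only [hz, star_sub, star_mul, star_one, star_gi]
  linear_combination (star x.2 * x.2) * gi_mul_gi

lemma neg_hz_self' (x : Lz) :
    -hz x x = star x.2 * x.2 + star ((1 + gi) * x.1 - x.2) * ((1 + gi) * x.1 - x.2) := by
  simp only [hz, star_sub, star_add, star_mul, star_one, star_gi]
  linear_combination (star x.1 * x.1) * gi_mul_gi

lemma norm_le_two_of_add_eq_two {a b : GaussianInt} (h : star a * a + star b * b = 2) :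
    a.norm ≤ 2 := by
  rw [mul_comm (star a), mul_comm (star b), ← Zsqrtd.norm_eq_mul_conj,
    ← Zsqrtd.norm_eq_mul_conj] at h
  have h' : a.norm + b.norm = 2 := by exact_mod_cast h
  linarith [GaussianInt.norm_nonneg b]

noncomputable def box : Finset GaussianInt :=
  (Finset.Icc (-1 : ℤ) 1 ×ˢ Finset.Icc (-1 : ℤ) 1).image fun a => ⟨a.1, a.2⟩

lemma mem_box_of_norm_le_two {z : GaussianInt} (h : z.norm ≤ 2) : z ∈ box := by
  rw [Zsqrtd.norm_def] at h
  refine Finset.mem_image.2 ⟨(z.re, z.im), ?_, rfl⟩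
  simp only [Finset.mem_product, Finset.mem_Icc]
  refine ⟨⟨?_, ?_⟩, ⟨?_, ?_⟩⟩ <;> nlinarith [sq_nonneg z.re, sq_nonneg z.im]

noncomputable def roots : Finset Lz := (box ×ˢ box).filter fun x => hz x x = -2

noncomputable def frames : Finset (Lz × Lz) := (roots ×ˢ roots).filter fun p => hz p.1 p.2 = 1 - gi

lemma mem_roots_iff {x : Lz} : x ∈ roots ↔ hz x x = -2 := by
  refine ⟨fun h => (Finset.mem_filter.1 h).2, fun h => Finset.mem_filter.2 ⟨?_, h⟩⟩
  have h1 := neg_hz_self x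
  have h2 := neg_hz_self' x
  rw [h, neg_neg] at h1 h2
  exact Finset.mem_product.2 ⟨mem_box_of_norm_le_two (norm_le_two_of_add_eq_two h1.symm),
    mem_box_of_norm_le_two (norm_le_two_of_add_eq_two h2.symm)⟩

lemma mem_frames_iff {p : Lz × Lz} : p ∈ frames ↔ IsFrame p := by
  simp only [frames, IsFrame, Finset.mem_filter, Finset.mem_product, mem_roots_iff, and_assoc]

lemma coe_frames : (frames : Set (Lz × Lz)) = {p | IsFrame p} :=
  Set.ext fun _ => mem_frames_iff

lemma card_frames : frames.card = 96 := by decide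

end Lz

/-- The isometry group `Isom(L_z)` of the Gaussian lattice `L_z`
has exactly `96` elements. -/
theorem stmt8 : {A : Lz → Lz | IsIsomLz A}.ncard = 96 := by
  rw [Lz.setOf_isIsomLz, ← Lz.coe_frames, Set.ncard_image_of_injective _ Lz.colMap_injective,
    Set.ncard_coe_finset, Lz.card_frames]
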